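/- Let ((X_k, Y_k))_{k≥1} be i.i.d. samples from a bivariate Gaussian distribution with covariance c = E[X_1 Y_1] − E[X_1]E[Y_1], and let Ĉ_m be the empirical covariance based on the first m samples. If c ≠ 0, then P(|Ĉ_m| ≥ m^{−1/5}) → 1 as m → ∞; and if c = 0, then P(|Ĉ_m| ≤ m^{−1/5}) → 1 as m → ∞. -/

import Mathlib

/-!
Write `Ĉ_m = Z̄_m - X̄_m Ȳ_m`, where `X̄_m, Ȳ_m, Z̄_m` are the sample means of `X`, `Y` and
`Z = X Y`. Gaussian coordinates have moments of all orders, so `X`, `Y`, `Z` are square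
integrable, and Chebyshev's inequality bounds the probability that a sample mean misses its
expectation by `ε m^{-1/5}` by `Var / (ε² m^{3/5}) → 0`. Convergence in probability at this
rate survives differences and products, so `|Ĉ_m - c| < m^{-1/5}` with probability tending to
one. For `c = 0` this is the second claim; for `c ≠ 0` eventually `2 m^{-1/5} ≤ |c|`, and then
`|Ĉ_m| > |c| - m^{-1/5} ≥ m^{-1/5}`.
-/

open MeasureTheory ProbabilityTheory Filter

/-- A measure `ν` on `ℝ × ℝ` is bivariate Gaussian with means `μX, μY`, variances `vX, vY`
and covariance `c` if every linear combination of the coordinates is Gaussian with the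
corresponding mean and variance. -/
def IsGaussianPair (ν : Measure (ℝ × ℝ)) (μX μY vX vY c : ℝ) : Prop :=
  ∀ a b : ℝ, ν.map (fun p => a * p.1 + b * p.2) =
    gaussianReal (a * μX + b * μY) (a ^ 2 * vX + 2 * a * b * c + b ^ 2 * vY).toNNReal

open scoped Topology ENNReal

namespace IsGaussianPair

variable {ν : Measure (ℝ × ℝ)} {μX μY vX vY c : ℝ}

lemma map_fst (h : IsGaussianPair ν μX μY vX vY c) :
    ν.map Prod.fst = gaussianReal μX vX.toNNReal := by
  simpa using h 1 0

lemma map_snd (h : IsGaussianPair ν μX μY vX vY c) :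
    ν.map Prod.snd = gaussianReal μY vY.toNNReal := by
  simpa using h 0 1

lemma memLp_fst (h : IsGaussianPair ν μX μY vX vY c) {p : ℝ≥0∞} (hp : p ≠ ∞) :
    MemLp Prod.fst p ν := by
  have := memLp_id_gaussianReal' (μ := μX) (v := vX.toNNReal) p hp
  rwa [← h.map_fst, memLp_map_measure_iff aestronglyMeasurable_id measurable_fst.aemeasurable]
    at this

lemma memLp_snd (h : IsGaussianPair ν μX μY vX vY c) {p : ℝ≥0∞} (hp : p ≠ ∞) :
    MemLp Prod.snd p ν := by
  have := memLp_id_gaussianReal' (μ := μY) (v := vY.toNNReal) p hp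
  rwa [← h.map_snd, memLp_map_measure_iff aestronglyMeasurable_id measurable_snd.aemeasurable]
    at this

lemma memLp_fst_mul_snd (h : IsGaussianPair ν μX μY vX vY c) :
    MemLp (fun x : ℝ × ℝ => x.1 * x.2) 2 ν := by
  have : ENNReal.HolderTriple 4 4 2 := ⟨by
    rw [show (4 : ℝ≥0∞) = 2 * 2 by norm_num, ENNReal.mul_inv (by simp) (by simp),
      ← div_eq_mul_inv, ENNReal.add_halves]⟩
  exact (h.memLp_snd (p := 4) (by simp)).mul (h.memLp_fst (p := 4) (by simp))

lemma integral_fst (h : IsGaussianPair ν μX μY vX vY c) : ∫ x, x.1 ∂ν = μX := by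
  rw [← integral_id_gaussianReal (μ := μX) (v := vX.toNNReal), ← h.map_fst]
  exact (integral_map measurable_fst.aemeasurable aestronglyMeasurable_id).symm

lemma integral_snd (h : IsGaussianPair ν μX μY vX vY c) : ∫ x, x.2 ∂ν = μY := by
  rw [← integral_id_gaussianReal (μ := μY) (v := vY.toNNReal), ← h.map_snd]
  exact (integral_map measurable_snd.aemeasurable aestronglyMeasurable_id).symm

end IsGaussianPair

lemma abs_mul_sub_mul_le (x y a b : ℝ) :
    |x * y - a * b| ≤ |x - a| * |y - b| + |b| * |x - a| + |a| * |y - b| :=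
  calc |x * y - a * b| = |(x - a) * (y - b) + b * (x - a) + a * (y - b)| := by ring_nf
    _ ≤ |(x - a) * (y - b)| + |b * (x - a)| + |a * (y - b)| := abs_add_three _ _ _
    _ = _ := by simp only [abs_mul]

lemma tendsto_natCast_mul_rpow_neg_sq {s : ℝ} (hs : s < 1 / 2) :
    Tendsto (fun m : ℕ => (m : ℝ) * ((m : ℝ) ^ (-s)) ^ 2) atTop atTop := by
  refine ((tendsto_rpow_atTop (by linarith : 0 < 1 + -2 * s)).comp
    tendsto_natCast_atTop_atTop).congr' ?_
  filter_upwards [eventually_gt_atTop 0] with m hm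
  have hm' : (0 : ℝ) ≤ m := m.cast_nonneg
  rw [Function.comp_apply, Real.rpow_one_add' hm' (by linarith), ← Real.rpow_natCast,
    ← Real.rpow_mul hm']
  norm_num [mul_comm]

section MeasureTendsto

variable {Ω ι : Type*} [MeasurableSpace Ω] {μ : Measure Ω} {l : Filter ι} {A B : ι → Set Ω}

lemma tendsto_measure_union_zero (hA : Tendsto (fun i => μ (A i)) l (𝓝 0))
    (hB : Tendsto (fun i => μ (B i)) l (𝓝 0)) : Tendsto (fun i => μ (A i ∪ B i)) l (𝓝 0) :=
  tendsto_of_tendsto_of_tendsto_of_le_of_le tendsto_const_nhds (by simpa using hA.add hB)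
    (fun _ => zero_le) (fun _ => measure_union_le _ _)

lemma tendsto_measure_zero_of_eventually_subset (hB : Tendsto (fun i => μ (B i)) l (𝓝 0))
    (hAB : ∀ᶠ i in l, A i ⊆ B i) : Tendsto (fun i => μ (A i)) l (𝓝 0) :=
  tendsto_of_tendsto_of_tendsto_of_le_of_le' tendsto_const_nhds hB
    (Eventually.of_forall fun _ => zero_le) (hAB.mono fun _ h => measure_mono h)

lemma tendsto_measure_one_of_eventually_compl_subset [IsProbabilityMeasure μ]
    (hB : Tendsto (fun i => μ (B i)) l (𝓝 0)) (hBA : ∀ᶠ i in l, (B i)ᶜ ⊆ A i) :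
    Tendsto (fun i => μ (A i)) l (𝓝 1) := by
  have h1 : Tendsto (fun i => 1 - μ (B i)) l (𝓝 1) := by
    simpa using ENNReal.Tendsto.sub tendsto_const_nhds hB (Or.inl ENNReal.one_ne_top)
  refine tendsto_of_tendsto_of_tendsto_of_le_of_le' h1 tendsto_const_nhds ?_
    (Eventually.of_forall fun _ => prob_le_one)
  filter_upwards [hBA] with i hi
  calc 1 - μ (B i) ≤ μ (B i)ᶜ := by
        rw [tsub_le_iff_left, ← measure_univ (μ := μ)]
        exact measure_univ_le_add_compl _
    _ ≤ μ (A i) := measure_mono hi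

end MeasureTendsto

section SampleMean

variable {Ω : Type*} {ξ : ℕ → Ω → ℝ}

noncomputable def sampleMean (ξ : ℕ → Ω → ℝ) (m : ℕ) (ω : Ω) : ℝ :=
  (∑ k ∈ Finset.range m, ξ k ω) / m

lemma sampleMean_eq_const_mul_sum (ξ : ℕ → Ω → ℝ) (m : ℕ) :
    sampleMean ξ m = fun ω => (m : ℝ)⁻¹ * (∑ k ∈ Finset.range m, ξ k) ω := by
  ext ω
  rw [sampleMean, Finset.sum_apply, div_eq_inv_mul]

variable [MeasurableSpace Ω] {P : Measure Ω}

lemma integral_sampleMean (hid : ∀ k, IdentDistrib (ξ k) (ξ 0) P P) (hint : Integrable (ξ 0) P)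
    {m : ℕ} (hm : m ≠ 0) : ∫ ω, sampleMean ξ m ω ∂P = ∫ ω, ξ 0 ω ∂P := by
  have hint' : ∀ k ∈ Finset.range m, Integrable (ξ k) P :=
    fun k _ => (hid k).symm.integrable_snd hint
  simp only [sampleMean]
  rw [integral_div, integral_finsetSum _ hint',
    Finset.sum_congr rfl fun k _ => (hid k).integral_eq, Finset.sum_const, Finset.card_range,
    nsmul_eq_mul, mul_div_cancel_left₀ _ (Nat.cast_ne_zero.2 hm)]

lemma variance_sampleMean (hindep : Pairwise fun i j => ξ i ⟂ᵢ[P] ξ j)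
    (hid : ∀ k, IdentDistrib (ξ k) (ξ 0) P P) (hL2 : MemLp (ξ 0) 2 P) (m : ℕ) :
    variance (sampleMean ξ m) P = variance (ξ 0) P / m := by
  have hL2' : ∀ k ∈ Finset.range m, MemLp (ξ k) 2 P := fun k _ => (hid k).symm.memLp_snd hL2
  rw [sampleMean_eq_const_mul_sum, variance_const_mul,
    IndepFun.variance_sum hL2' fun i _ j _ hij => hindep hij,
    Finset.sum_congr rfl fun k _ => (hid k).variance_eq, Finset.sum_const, Finset.card_range,
    nsmul_eq_mul]
  rcases eq_or_ne m 0 with rfl | hm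
  · simp
  · field_simp

lemma measure_le_abs_sampleMean_sub_le [IsFiniteMeasure P]
    (hindep : Pairwise fun i j => ξ i ⟂ᵢ[P] ξ j)
    (hid : ∀ k, IdentDistrib (ξ k) (ξ 0) P P) (hL2 : MemLp (ξ 0) 2 P) {m : ℕ} (hm : m ≠ 0)
    {δ : ℝ} (hδ : 0 < δ) :
    P {ω | δ ≤ |sampleMean ξ m ω - ∫ ω, ξ 0 ω ∂P|}
      ≤ ENNReal.ofReal (variance (ξ 0) P / (m * δ ^ 2)) := by
  have hL2m : MemLp (sampleMean ξ m) 2 P := by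
    rw [sampleMean_eq_const_mul_sum]
    exact (memLp_finsetSum' _ fun k _ => (hid k).symm.memLp_snd hL2).const_mul _
  have := meas_ge_le_variance_div_sq hL2m hδ
  rwa [integral_sampleMean hid (hL2.integrable one_le_two) hm,
    variance_sampleMean hindep hid hL2, div_div] at this

end SampleMean

section RateOfConvergence

variable {Ω ι : Type*} [MeasurableSpace Ω] {P : Measure Ω} {l : Filter ι} {r : ι → ℝ}
  {f g : ι → Ω → ℝ} {a b : ℝ}

def TendstoInMeasureAtRate (P : Measure Ω) (f : ι → Ω → ℝ) (l : Filter ι) (r : ι → ℝ) (a : ℝ) :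
    Prop :=
  ∀ ε > 0, Tendsto (fun i => P {ω | ε * r i ≤ |f i ω - a|}) l (𝓝 0)

lemma TendstoInMeasureAtRate.sub (hf : TendstoInMeasureAtRate P f l r a)
    (hg : TendstoInMeasureAtRate P g l r b) :
    TendstoInMeasureAtRate P (fun i ω => f i ω - g i ω) l r (a - b) := by
  intro ε hε
  refine tendsto_measure_zero_of_eventually_subset
    (tendsto_measure_union_zero (hf (ε / 2) (half_pos hε)) (hg (ε / 2) (half_pos hε)))
    (Eventually.of_forall fun i ω hω => ?_)
  by_contra h
  simp only [Set.mem_union, Set.mem_ofPred_eq, not_or, not_le] at h hω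
  have := abs_sub (f i ω - a) (g i ω - b)
  rw [show f i ω - a - (g i ω - b) = f i ω - g i ω - (a - b) by ring] at this
  linarith

lemma TendstoInMeasureAtRate.mul (hf : TendstoInMeasureAtRate P f l r a)
    (hg : TendstoInMeasureAtRate P g l r b) (hr : ∀ᶠ i in l, r i ≤ 1) :
    TendstoInMeasureAtRate P (fun i ω => f i ω * g i ω) l r (a * b) := by
  intro ε hε
  set δ := ε / (1 + |a| + |b|)
  have hδ : 0 < δ := by positivity
  -- the event `r ≤ |g - b|` is excluded as well, so that `|g - b| ≤ 1` tames the quadratic term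
  refine tendsto_measure_zero_of_eventually_subset (tendsto_measure_union_zero (hf δ hδ)
    (tendsto_measure_union_zero (hg δ hδ) (hg 1 one_pos))) ?_
  filter_upwards [hr] with i hri ω hω
  by_contra h
  simp only [Set.mem_union, Set.mem_ofPred_eq, not_or, not_le, one_mul] at h hω
  obtain ⟨hfa, hgb, hgb₁⟩ := h
  have hfg : |f i ω - a| * |g i ω - b| < δ * r i :=
    calc |f i ω - a| * |g i ω - b| ≤ |f i ω - a| * 1 :=
          mul_le_mul_of_nonneg_left (by linarith) (abs_nonneg _)
      _ < δ * r i := by linarith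
  have hbf := mul_le_mul_of_nonneg_left hfa.le (abs_nonneg b)
  have hag := mul_le_mul_of_nonneg_left hgb.le (abs_nonneg a)
  have hδε : δ * r i * (1 + |a| + |b|) = ε * r i := by
    simp only [δ]; field_simp
  linarith [abs_mul_sub_mul_le (f i ω) (g i ω) a b]

variable [IsProbabilityMeasure P]

lemma TendstoInMeasureAtRate.tendsto_measure_abs_sub_le (h : TendstoInMeasureAtRate P f l r a) :
    Tendsto (fun i => P {ω | |f i ω - a| ≤ r i}) l (𝓝 1) :=
  tendsto_measure_one_of_eventually_compl_subset (B := fun i => {ω | r i ≤ |f i ω - a|})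
    (by simpa using h 1 one_pos)
    (Eventually.of_forall fun _ _ hω => (not_le.1 (Set.notMem_ofPred_iff.1 hω)).le)

lemma TendstoInMeasureAtRate.tendsto_measure_le_abs (h : TendstoInMeasureAtRate P f l r a)
    (ha : a ≠ 0) (hr : Tendsto r l (𝓝 0)) :
    Tendsto (fun i => P {ω | r i ≤ |f i ω|}) l (𝓝 1) := by
  refine tendsto_measure_one_of_eventually_compl_subset (by simpa using h 1 one_pos) ?_
  filter_upwards [hr.eventually (eventually_le_nhds (half_pos (abs_pos.2 ha)))] with i hri ω hω
  simp only [Set.mem_compl_iff, Set.mem_ofPred_eq, not_le] at hω ⊢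
  linarith [abs_sub_abs_le_abs_sub a (f i ω), abs_sub_comm a (f i ω)]

end RateOfConvergence

section SampleMeanRate

variable {Ω : Type*} [MeasurableSpace Ω] {P : Measure Ω} [IsFiniteMeasure P] {r : ℕ → ℝ}

lemma tendstoInMeasureAtRate_sampleMean {ξ : ℕ → Ω → ℝ}
    (hindep : Pairwise fun i j => ξ i ⟂ᵢ[P] ξ j) (hid : ∀ k, IdentDistrib (ξ k) (ξ 0) P P)
    (hL2 : MemLp (ξ 0) 2 P) (hr_pos : ∀ᶠ m in atTop, 0 < r m)
    (hr : Tendsto (fun m : ℕ => m * r m ^ 2) atTop atTop) :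
    TendstoInMeasureAtRate P (sampleMean ξ) atTop r (∫ ω, ξ 0 ω ∂P) := by
  intro ε hε
  have hbound : Tendsto
      (fun m : ℕ => ENNReal.ofReal (variance (ξ 0) P / ε ^ 2 * (m * r m ^ 2)⁻¹)) atTop (𝓝 0) := by
    simpa using ENNReal.tendsto_ofReal (hr.inv_tendsto_atTop.const_mul _)
  refine tendsto_of_tendsto_of_tendsto_of_le_of_le' tendsto_const_nhds hbound
    (Eventually.of_forall fun _ => zero_le) ?_
  filter_upwards [hr_pos, eventually_ne_atTop 0] with m hrm hm
  refine (measure_le_abs_sampleMean_sub_le hindep hid hL2 hm (by positivity)).trans_eq ?_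
  congr 1
  field_simp

lemma tendstoInMeasureAtRate_sampleMean_comp {β : Type*} [MeasurableSpace β] {W : ℕ → Ω → β}
    (hindep : iIndepFun W P) (hid : ∀ k, IdentDistrib (W k) (W 0) P P) {φ : β → ℝ}
    (hφ : Measurable φ) (hL2 : MemLp (fun ω => φ (W 0 ω)) 2 P) (hr_pos : ∀ᶠ m in atTop, 0 < r m)
    (hr : Tendsto (fun m : ℕ => m * r m ^ 2) atTop atTop) :
    TendstoInMeasureAtRate P (sampleMean fun k ω => φ (W k ω)) atTop r (∫ ω, φ (W 0 ω) ∂P) :=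
  tendstoInMeasureAtRate_sampleMean (fun _ _ hij => (hindep.indepFun hij).comp hφ hφ)
    (fun k => (hid k).comp hφ) hL2 hr_pos hr

end SampleMeanRate

theorem empirical_covariance_threshold_general
    {Ω : Type*} [MeasurableSpace Ω] (P : Measure Ω) [IsProbabilityMeasure P]
    (W : ℕ → Ω → ℝ × ℝ)
    (hindep : iIndepFun W P)
    (hid : ∀ k, IdentDistrib (W k) (W 0) P P)
    (μX μY vX vY c : ℝ)
    (hgauss : IsGaussianPair (P.map (W 0)) μX μY vX vY c)
    (hc : c = (∫ ω, (W 0 ω).1 * (W 0 ω).2 ∂P) - μX * μY) :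
    (c ≠ 0 →
      Tendsto (fun m : ℕ =>
          P {ω | (m : ℝ) ^ (-(1 / 5 : ℝ)) ≤
              |(∑ k ∈ Finset.range m, (W k ω).1 * (W k ω).2) / m
                - ((∑ k ∈ Finset.range m, (W k ω).1) / m)
                    * ((∑ k ∈ Finset.range m, (W k ω).2) / m)|})
        atTop (nhds 1)) ∧
    (c = 0 →
      Tendsto (fun m : ℕ =>
          P {ω | |(∑ k ∈ Finset.range m, (W k ω).1 * (W k ω).2) / m
                - ((∑ k ∈ Finset.range m, (W k ω).1) / m)
                    * ((∑ k ∈ Finset.range m, (W k ω).2) / m)|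
              ≤ (m : ℝ) ^ (-(1 / 5 : ℝ))})
        atTop (nhds 1)) := by
  set r : ℕ → ℝ := fun m => (m : ℝ) ^ (-(1 / 5 : ℝ))
  have hr₀ : Tendsto r atTop (𝓝 0) :=
    (tendsto_rpow_neg_atTop (by norm_num)).comp tendsto_natCast_atTop_atTop
  have hr_pos : ∀ᶠ m in atTop, 0 < r m :=
    (eventually_gt_atTop 0).mono fun m hm => Real.rpow_pos_of_pos (Nat.cast_pos.2 hm) _
  have hr_le : ∀ᶠ m in atTop, r m ≤ 1 := (eventually_ge_atTop 1).mono fun m hm =>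
    Real.rpow_le_one_of_one_le_of_nonpos (Nat.one_le_cast.2 hm) (by norm_num)
  have hr : Tendsto (fun m : ℕ => m * r m ^ 2) atTop atTop :=
    tendsto_natCast_mul_rpow_neg_sq (by norm_num)
  have hW : AEMeasurable (W 0) P := (hid 0).aemeasurable_fst
  have hmean {φ : ℝ × ℝ → ℝ} (hφ : Measurable φ) (hL2 : MemLp φ 2 (P.map (W 0))) :=
    tendstoInMeasureAtRate_sampleMean_comp hindep hid hφ
      ((memLp_map_measure_iff hL2.1 hW).1 hL2) hr_pos hr
  have hX := hmean measurable_fst (hgauss.memLp_fst (by simp))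
  have hY := hmean measurable_snd (hgauss.memLp_snd (by simp))
  have hXY := hmean (φ := fun p => p.1 * p.2) (measurable_fst.mul measurable_snd)
    hgauss.memLp_fst_mul_snd
  rw [← integral_map hW measurable_fst.aestronglyMeasurable, hgauss.integral_fst] at hX
  rw [← integral_map hW measurable_snd.aestronglyMeasurable, hgauss.integral_snd] at hY
  have hC := hXY.sub (hX.mul hY hr_le)
  rw [← hc] at hC
  refine ⟨fun hc₀ => hC.tendsto_measure_le_abs hc₀ hr₀, fun hc₀ => ?_⟩
  have h := hC.tendsto_measure_abs_sub_le
  simp only [hc₀, sub_zero] at h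
  exact h

/-- edge-detection criterion of the paper's Lemma 1. For i.i.d. bivariate
Gaussian samples with covariance `c = E[X·Y] − E[X]E[Y]` and empirical covariance `Ĉ_m`:
if `c ≠ 0` then `P(|Ĉ_m| ≥ m^{−1/5}) → 1`, and if `c = 0` then `P(|Ĉ_m| ≤ m^{−1/5}) → 1`. -/
theorem empirical_covariance_threshold
    {Ω : Type*} [MeasurableSpace Ω] (P : Measure Ω) [IsProbabilityMeasure P]
    (W : ℕ → Ω → ℝ × ℝ) (hmeas : ∀ k, Measurable (W k))
    (hindep : iIndepFun W P)
    (hid : ∀ k, IdentDistrib (W k) (W 0) P P)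
    (μX μY vX vY c : ℝ)
    (hgauss : IsGaussianPair (P.map (W 0)) μX μY vX vY c)
    (hc : c = (∫ ω, (W 0 ω).1 * (W 0 ω).2 ∂P) - μX * μY) :
    (c ≠ 0 →
      Tendsto (fun m : ℕ =>
          P {ω | (m : ℝ) ^ (-(1 / 5 : ℝ)) ≤
              |(∑ k ∈ Finset.range m, (W k ω).1 * (W k ω).2) / m
                - ((∑ k ∈ Finset.range m, (W k ω).1) / m)
                    * ((∑ k ∈ Finset.range m, (W k ω).2) / m)|})
        atTop (nhds 1)) ∧
    (c = 0 →
      Tendsto (fun m : ℕ =>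
          P {ω | |(∑ k ∈ Finset.range m, (W k ω).1 * (W k ω).2) / m
                - ((∑ k ∈ Finset.range m, (W k ω).1) / m)
                    * ((∑ k ∈ Finset.range m, (W k ω).2) / m)|
              ≤ (m : ℝ) ^ (-(1 / 5 : ℝ))})
        atTop (nhds 1)) :=
  empirical_covariance_threshold_general P W hindep hid μX μY vX vY c hgauss hc
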